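/- In any Hamiltonian decomposition of K(a^{(q)};λ,μ) with a > 1, μ ≥ 1 and λ = μa(q−1), each Hamiltonian cycle contains exactly a−1 pure edges from each of the q parts and exactly q mixed edges. -/

import Mathlib

/-!
A Hamiltonian cycle is connected, so every part meets at least one of its mixed edges. Every
vertex has degree 2 in the cycle and the pure edges inside a part account for an even number of
edge-ends there, so each part meets an even number of mixed edge-ends, hence at least two: every
colour class has at least `q` mixed edges. Counting degrees at one vertex gives
`2k = μa²(q - 1)`, so the classes have at least `kq = μa²q(q - 1)/2` mixed edges in total, which
is exactly the number of mixed edges of the multigraph. Hence each class has exactly `q` mixed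
edges and exactly two mixed edge-ends at each part, and therefore `a - 1` pure edges inside each
part.
-/

open Finset

/-- The vertex set of `K(a^{(p)};λ,μ)`: `p` parts, each of size `a`. -/
abbrev KV (p a : ℕ) := Fin p × Fin a

/-- The edge multiplicity function of `K(a^{(p)};λ,μ)`: vertices in the same
part are joined by `lam` edges, vertices in different parts by `mu` edges. -/
def Kmult (p a lam mu : ℕ) (u v : KV p a) : ℕ :=
  if u = v then 0 else if u.1 = v.1 then lam else mu

/-- The (simple) support graph of a loopless multigraph given by its
multiplicity function `w`. -/
def supp {V : Type} (w : V → V → ℕ) : SimpleGraph V where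
  Adj u v := u ≠ v ∧ (0 < w u v ∨ 0 < w v u)
  symm := by
    constructor
    intro u v h
    exact ⟨h.1.symm, h.2.symm⟩
  loopless := by
    constructor
    intro v h
    exact h.1 rfl

/-- The degree of a vertex in a loopless multigraph given by its multiplicity
function. -/
def mdeg {V : Type} [Fintype V] (w : V → V → ℕ) (v : V) : ℕ := ∑ u, w v u

/-- The number of connected components of the (spanning) subgraph given by the
multiplicity function `w`. -/
noncomputable def numComp {V : Type} (w : V → V → ℕ) : ℕ :=
  Nat.card (supp w).ConnectedComponent

/-- Every component of the multigraph given by `w` is a path (possibly of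
length `0`): no multiple edges, no cycles, and all degrees at most `2`. -/
def IsPathForest {V : Type} [Fintype V] (w : V → V → ℕ) : Prop :=
  (∀ u v, w u v ≤ 1) ∧ (supp w).IsAcyclic ∧ (∀ v, mdeg w v ≤ 2)

/-- The loopless multigraph given by `w` is a Hamiltonian cycle of the complete
vertex set `V`: it is connected (and spanning) and every vertex has degree `2`. -/
def IsHamCycle {V : Type} [Fintype V] (w : V → V → ℕ) : Prop :=
  (supp w).Connected ∧ ∀ v, mdeg w v = 2

/-- `c` is a `k`-edge-coloring of `K(a^{(p)};λ,μ)`, recorded by the (symmetric)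
multiplicity functions `c j` of its color classes, which partition the edges. -/
def KColoring (p a lam mu k : ℕ) (c : Fin k → KV p a → KV p a → ℕ) : Prop :=
  (∀ j u v, c j u v = c j v u) ∧ (∀ u v, ∑ j, c j u v = Kmult p a lam mu u v)

/-- The canonical identification of the vertices of `K(a^{(p)};λ,μ)` with the
vertices of the first `p` parts of `K(a^{(p+r)};λ,μ)`. -/
def KVemb (p a r : ℕ) (x : KV p a) : KV (p + r) a := (Fin.castAdd r x.1, x.2)

/-- The `k`-edge-coloring `c` of `K(a^{(p)};λ,μ)` can be embedded into a
Hamiltonian decomposition of `K(a^{(p+r)};λ,μ)`: the coloring extends to a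
`k`-edge-coloring of `K(a^{(p+r)};λ,μ)` all of whose color classes are
Hamiltonian cycles. -/
def EmbedsInHamDecomp (p a lam mu r k : ℕ)
    (c : Fin k → KV p a → KV p a → ℕ) : Prop :=
  ∃ c' : Fin k → KV (p + r) a → KV (p + r) a → ℕ,
    KColoring (p + r) a lam mu k c' ∧
    (∀ j, IsHamCycle (c' j)) ∧
    (∀ j u v, c' j (KVemb p a r u) (KVemb p a r v) = c j u v)

/-- Twice the number of pure edges of `w` lying inside part `i`. -/
def purePairSum (p a : ℕ) (w : KV p a → KV p a → ℕ) (i : Fin p) : ℕ :=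
  ∑ x : Fin a, ∑ y : Fin a, w (i, x) (i, y)

/-- Twice the number of mixed edges of `w` (edges joining different parts). -/
def mixedPairSum (p a : ℕ) (w : KV p a → KV p a → ℕ) : ℕ :=
  ∑ u : KV p a, ∑ v : KV p a, if u.1 ≠ v.1 then w u v else 0

theorem even_sum_sum_of_symm {α : Type*} (s : Finset α) (f : α → α → ℕ)
    (hsymm : ∀ x y, f x y = f y x) (hdiag : ∀ x, f x x = 0) :
    Even (∑ x ∈ s, ∑ y ∈ s, f x y) := by
  rw [← ZMod.natCast_eq_zero_iff_even, ← Finset.sum_product' s s (fun x y => f x y)]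
  push_cast
  refine Finset.sum_involution (fun z _ => z.swap) (fun z _ => ?_) (fun z _ hz hfix => ?_)
    (fun z hz => Finset.mem_product.2 (Finset.mem_product.1 hz).symm) (fun z _ => z.swap_swap)
  · rw [Prod.fst_swap, Prod.snd_swap, hsymm z.2, ← two_mul, (by decide : (2 : ZMod 2) = 0),
      zero_mul]
  · obtain ⟨x, y⟩ := z
    obtain rfl : y = x := congrArg Prod.fst hfix
    simp [hdiag] at hz

section Parts

variable {p a : ℕ}

theorem sum_eq_sum_part_add_sum_offPart (f : KV p a → ℕ) (i : Fin p) :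
    ∑ u, f u = ∑ y, f (i, y) + ∑ u, if u.1 ≠ i then f u else 0 := by
  have hsplit : ∀ u : KV p a,
      f u = (if u.1 = i then f u else 0) + (if u.1 ≠ i then f u else 0) := by
    intro u; by_cases h : u.1 = i <;> simp [h]
  rw [Finset.sum_congr rfl fun u _ => hsplit u, Finset.sum_add_distrib, Fintype.sum_prod_type
    (fun u => if u.1 = i then f u else 0), Finset.sum_comm]
  simp only [Finset.sum_ite_eq', Finset.mem_univ, if_true]

theorem sum_offPart_const (i : Fin p) (t : ℕ) :
    ∑ u : KV p a, (if u.1 ≠ i then t else 0) = (p - 1) * a * t := by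
  rw [Finset.sum_ite, Finset.sum_const_zero, add_zero, Finset.sum_const, smul_eq_mul]
  have hfilter :
      ({u | u.1 ≠ i} : Finset (KV p a)) = ({i}ᶜ : Finset (Fin p)) ×ˢ Finset.univ := by
    ext; simp
  simp [hfilter, Finset.card_compl]

/-- The number of mixed edges with an end in part `i`; unlike `mixedPairSum`, not doubled. -/
def mixedPairSumAt (p a : ℕ) (w : KV p a → KV p a → ℕ) (i : Fin p) : ℕ :=
  ∑ x : Fin a, ∑ v : KV p a, if v.1 ≠ i then w (i, x) v else 0

theorem purePairSum_add_mixedPairSumAt (w : KV p a → KV p a → ℕ) (i : Fin p) :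
    purePairSum p a w i + mixedPairSumAt p a w i = ∑ x, mdeg w (i, x) := by
  simp only [purePairSum, mixedPairSumAt, mdeg, ← Finset.sum_add_distrib,
    ← sum_eq_sum_part_add_sum_offPart]

theorem sum_mixedPairSumAt (w : KV p a → KV p a → ℕ) :
    ∑ i, mixedPairSumAt p a w i = mixedPairSum p a w := by
  rw [mixedPairSum, Fintype.sum_prod_type]
  refine Finset.sum_congr rfl fun i _ => Finset.sum_congr rfl fun x _ =>
    Finset.sum_congr rfl fun v _ => ?_
  simp only [ne_comm]

theorem mixedPairSumAt_pos {w : KV p a → KV p a → ℕ} (hsymm : ∀ u v, w u v = w v u)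
    (hconn : (supp w).Connected) {i : Fin p} {v : KV p a} (hv : v.1 ≠ i) :
    0 < mixedPairSumAt p a w i := by
  obtain ⟨walk⟩ := hconn.preconnected (i, v.2) v
  obtain ⟨d, -, hfst, hsnd⟩ := walk.exists_boundary_dart {u | u.1 = i} rfl hv
  have hpos : 0 < w d.fst d.snd := d.adj.2.elim id fun h => hsymm d.snd _ ▸ h
  refine Finset.sum_pos' (fun _ _ => Nat.zero_le _) ⟨d.fst.2, Finset.mem_univ _, ?_⟩
  refine Finset.sum_pos' (fun _ _ => Nat.zero_le _) ⟨d.snd, Finset.mem_univ _, ?_⟩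
  rw [if_pos (show d.snd.1 ≠ i from hsnd), ← show d.fst.1 = i from hfst]
  exact hpos

end Parts

section Kmult

variable {p a : ℕ}

theorem Kmult_of_fst_ne (lam mu : ℕ) {u v : KV p a} (h : u.1 ≠ v.1) :
    Kmult p a lam mu u v = mu := by
  rw [Kmult, if_neg fun huv => h (congrArg Prod.fst huv), if_neg h]

theorem sum_offPart_Kmult (lam mu : ℕ) (v : KV p a) :
    ∑ u, (if u.1 ≠ v.1 then Kmult p a lam mu v u else 0) = (p - 1) * a * mu := by
  rw [← sum_offPart_const v.1 mu]
  exact Finset.sum_congr rfl fun u _ =>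
    ite_congr rfl (fun h => Kmult_of_fst_ne lam mu (Ne.symm h)) fun _ => rfl

theorem mdeg_Kmult (lam mu : ℕ) (v : KV p a) :
    mdeg (Kmult p a lam mu) v = (a - 1) * lam + (p - 1) * a * mu := by
  rw [mdeg, sum_eq_sum_part_add_sum_offPart _ v.1, sum_offPart_Kmult]
  congr 1
  simp [Kmult, Prod.ext_iff, Finset.sum_ite, Finset.filter_not, Finset.filter_eq,
    Finset.card_sdiff]

theorem mixedPairSum_Kmult (lam mu : ℕ) :
    mixedPairSum p a (Kmult p a lam mu) = p * a * ((p - 1) * a * mu) := by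
  calc mixedPairSum p a (Kmult p a lam mu) = ∑ _u : KV p a, (p - 1) * a * mu :=
        Finset.sum_congr rfl fun u _ => by simp only [ne_comm (a := u.1), sum_offPart_Kmult]
    _ = p * a * ((p - 1) * a * mu) := by simp

end Kmult

namespace IsHamCycle

variable {p a : ℕ} {w : KV p a → KV p a → ℕ}

theorem purePairSum_add_mixedPairSumAt_eq (hw : IsHamCycle w) (i : Fin p) :
    purePairSum p a w i + mixedPairSumAt p a w i = 2 * a := by
  simp [purePairSum_add_mixedPairSumAt, hw.2, mul_comm]

theorem two_le_mixedPairSumAt (hw : IsHamCycle w) (hsymm : ∀ u v, w u v = w v u)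
    (hdiag : ∀ v, w v v = 0) (hp : 2 ≤ p) (i : Fin p) : 2 ≤ mixedPairSumAt p a w i := by
  obtain ⟨v⟩ := hw.1.nonempty
  obtain ⟨i', hi'⟩ := Fintype.exists_ne_of_one_lt_card (by simp; omega) i
  have hpos := mixedPairSumAt_pos hsymm hw.1 (v := (i', v.2)) hi'
  obtain ⟨r, hr⟩ : Even (purePairSum p a w i) :=
    even_sum_sum_of_symm _ _ (fun _ _ => hsymm _ _) fun _ => hdiag _
  have := hw.purePairSum_add_mixedPairSumAt_eq i
  omega

theorem two_mul_le_mixedPairSum (hw : IsHamCycle w) (hsymm : ∀ u v, w u v = w v u)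
    (hdiag : ∀ v, w v v = 0) (hp : 2 ≤ p) : 2 * p ≤ mixedPairSum p a w := by
  rw [← sum_mixedPairSumAt]
  calc 2 * p = ∑ _i : Fin p, 2 := by simp [mul_comm]
    _ ≤ _ := Finset.sum_le_sum fun i _ => hw.two_le_mixedPairSumAt hsymm hdiag hp i

theorem purePairSum_eq_of_mixedPairSum_eq (hw : IsHamCycle w) (hsymm : ∀ u v, w u v = w v u)
    (hdiag : ∀ v, w v v = 0) (hp : 2 ≤ p)
    (hmixed : mixedPairSum p a w = 2 * p) (i : Fin p) : purePairSum p a w i = 2 * (a - 1) := by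
  have hsum : ∑ _i : Fin p, 2 = ∑ i, mixedPairSumAt p a w i := by
    simp [sum_mixedPairSumAt, hmixed, mul_comm]
  have htwo := (Finset.sum_eq_sum_iff_of_le fun i _ =>
    hw.two_le_mixedPairSumAt hsymm hdiag hp i).1 hsum i (Finset.mem_univ i)
  have := hw.purePairSum_add_mixedPairSumAt_eq i
  omega

end IsHamCycle

namespace KColoring

variable {p a lam mu k : ℕ} {c : Fin k → KV p a → KV p a → ℕ}

theorem apply_self (hc : KColoring p a lam mu k c) (j : Fin k) (v : KV p a) : c j v v = 0 := by
  have hle : c j v v ≤ ∑ j, c j v v :=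
    Finset.single_le_sum (f := fun j => c j v v) (fun _ _ => Nat.zero_le _) (Finset.mem_univ j)
  simpa [hc.2, Kmult] using hle

theorem sum_mdeg (hc : KColoring p a lam mu k c) (v : KV p a) :
    ∑ j, mdeg (c j) v = mdeg (Kmult p a lam mu) v := by
  simp only [mdeg, ← hc.2]
  exact Finset.sum_comm

theorem sum_mixedPairSum (hc : KColoring p a lam mu k c) :
    ∑ j, mixedPairSum p a (c j) = mixedPairSum p a (Kmult p a lam mu) := by
  simp only [mixedPairSum, ← hc.2]
  rw [Finset.sum_comm]
  refine Finset.sum_congr rfl fun u _ => ?_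
  rw [Finset.sum_comm]
  exact Finset.sum_congr rfl fun v _ => by split_ifs <;> simp

theorem two_mul_num_colors_eq (hc : KColoring p a lam mu k c) (hham : ∀ j, IsHamCycle (c j))
    (v : KV p a) : 2 * k = (a - 1) * lam + (p - 1) * a * mu := by
  rw [← mdeg_Kmult lam mu v, ← hc.sum_mdeg v]
  simp [(hham _).2 v, mul_comm]

end KColoring

theorem extremal_ham_cycle_edge_counts_general
    (a q mu k : ℕ)
    (c : Fin k → KV q a → KV q a → ℕ)
    (hc : KColoring q a (mu * a * (q - 1)) mu k c)
    (hham : ∀ j, IsHamCycle (c j)) :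
    ∀ j, (∀ i, purePairSum q a (c j) i = 2 * (a - 1)) ∧
      mixedPairSum q a (c j) = 2 * q := by
  intro j
  obtain ⟨v⟩ := (hham j).1.nonempty
  have hk : 2 * k = a * ((q - 1) * a * mu) := by
    rw [hc.two_mul_num_colors_eq hham v]
    obtain ⟨b, rfl⟩ := Nat.exists_eq_add_one_of_ne_zero (Fin.pos v.2).ne'
    simp only [Nat.add_sub_cancel]
    ring
  have hq : 2 ≤ q := by
    by_contra hq
    have hk0 : k = 0 := by simpa [show q - 1 = 0 by omega] using hk
    exact j.pos.ne' hk0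
  have hmixed : ∀ j, mixedPairSum q a (c j) = 2 * q := by
    have htotal : ∑ _j : Fin k, 2 * q = ∑ j, mixedPairSum q a (c j) := by
      rw [hc.sum_mixedPairSum, mixedPairSum_Kmult, Finset.sum_const, Finset.card_univ,
        Fintype.card_fin, smul_eq_mul, show k * (2 * q) = q * (2 * k) by ring, hk]
      ring
    intro j
    exact ((Finset.sum_eq_sum_iff_of_le fun j _ =>
      (hham j).two_mul_le_mixedPairSum (hc.1 j) (hc.apply_self j) hq).1 htotal j
      (Finset.mem_univ j)).symm
  exact ⟨(hham j).purePairSum_eq_of_mixedPairSum_eq (hc.1 j) (hc.apply_self j) hq (hmixed j),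
    hmixed j⟩

/-- In any Hamiltonian decomposition of `K(a^{(q)};λ,μ)` with `a > 1`, `μ ≥ 1`
and `λ = μa(q−1)`, each Hamiltonian cycle contains exactly `a−1` pure edges
from each of the `q` parts and exactly `q` mixed edges.  (Pure/mixed edge
counts are recorded doubled, as ordered-pair sums.) -/
theorem extremal_ham_cycle_edge_counts
    (a q mu k : ℕ) (ha : 1 < a) (hq : 1 ≤ q) (hmu : 1 ≤ mu)
    (c : Fin k → KV q a → KV q a → ℕ)
    (hc : KColoring q a (mu * a * (q - 1)) mu k c)
    (hham : ∀ j, IsHamCycle (c j)) :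
    ∀ j, (∀ i, purePairSum q a (c j) i = 2 * (a - 1)) ∧
      mixedPairSum q a (c j) = 2 * q :=
  extremal_ham_cycle_edge_counts_general a q mu k c hc hham
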